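/- arXiv:1401.7869 — 9 statements merged into one kernel-verified Lean document; each statement's English description precedes it below -/
import Mathlib

section
/- If p is an idempotent ultrafilter on ℕ (with respect to addition), then for every natural number k ≥ 1, the set kℕ of positive multiples of k belongs to p. -/
/-! Reduction modulo `k` is additive, so it pushes `p` forward to an idempotent ultrafilter on the
finite group `ZMod k`. There every ultrafilter is principal, and `pure a` is idempotent only when
`a + a = a`, i.e. `a = 0`; hence `p`-almost every `n` is `0` modulo `k`. -/

/- Mathlib's sum of ultrafilters (from the Hindman file): `A ∈ p + q` iff the set of `m` such
that `{n : m + n ∈ A} ∈ q` belongs to `p`. -/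
attribute [local instance] Ultrafilter.add

namespace Ultrafilter

theorem map_add {M N : Type*} [Add M] [Add N] (φ : M →ₙ+ N) (U V : Ultrafilter M) :
    map φ (U + V) = map φ U + map φ V := by
  ext s
  change (∀ᶠ m in U, ∀ᶠ n in V, φ (m + n) ∈ s) ↔ ∀ᶠ m in U, ∀ᶠ n in V, φ m + φ n ∈ s
  simp only [_root_.map_add]

theorem pure_add_pure {M : Type*} [Add M] (a b : M) :
    (pure a + pure b : Ultrafilter M) = pure (a + b) :=
  rfl

theorem eq_pure_zero_of_add_self {G : Type*} [AddLeftCancelMonoid G] [Finite G]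
    {U : Ultrafilter G} (hU : U + U = U) : U = pure 0 := by
  obtain ⟨a, rfl⟩ := U.eq_pure_of_finite
  rw [pure_add_pure, pure_injective.eq_iff, add_eq_left] at hU
  rw [hU]

theorem preimage_zero_mem_of_add_self {M G : Type*} [Add M] [AddLeftCancelMonoid G] [Finite G]
    (φ : M →ₙ+ G) {U : Ultrafilter M} (hU : U + U = U) : φ ⁻¹' {0} ∈ U := by
  have : map φ U = pure 0 := eq_pure_zero_of_add_self (by rw [← map_add, hU])
  rw [← mem_map, this]
  rfl

end Ultrafilter

/-- If `p` is an idempotent ultrafilter on the positive natural numbers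
(with respect to addition), then for every natural number `k ≥ 1`, the set of positive
multiples of `k` belongs to `p`. -/
theorem idempotent_ultrafilter_mem_multiples
    (p : Ultrafilter ℕ+) (hp : p + p = p) (k : ℕ) (hk : 1 ≤ k) :
    {n : ℕ+ | k ∣ (n : ℕ)} ∈ p := by
  have : NeZero k := ⟨by omega⟩
  let residue : ℕ+ →ₙ+ ZMod k := (Nat.castAddMonoidHom (ZMod k)).toAddHom.comp PNat.coeAddHom
  convert Ultrafilter.preimage_zero_mem_of_add_self residue hp using 1
  ext n
  exact (ZMod.natCast_eq_zero_iff _ _).symm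
end

section
/- Let (X,d) be a compact metric space, p an idempotent ultrafilter on ℕ, and (x_n) a sequence in X with p-lim x_n = x. Then there exists an increasing sequence (n_i) of natural numbers such that the IP-limit of x over the finite sums of (n_i) equals x; i.e., for every ε > 0 there is N such that for every nonempty finite set α ⊂ ℕ with min α ≥ N, d(x_{n_α}, x) < ε, where n_α = Σ_{i∈α} n_i. -/
/-!
Galvin–Glazer: since `p + p = p`, every `S ∈ p` contains some `a` with `{m | a + m ∈ S} ∈ p`.
Starting from `A 0 = {n | x n ∈ ball x₀ 1}`, pick such an `a 0 ∈ A 0`, shrink to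
`A 1 = A 0 ∩ (A 0 - a 0) ∩ {n | x n ∈ ball x₀ (1/2)} ∩ (a 0, ∞) ∈ p` (the last set is in `p`
because `p` cannot be principal: `ℕ+` has no idempotents), and repeat. The sets `A k`
decrease and satisfy `a k + A (k + 1) ⊆ A k`, so a finite sum of the `a i` with indices `≥ k`
lies in `A k`, where `x` is within `1 / (k + 1)` of `x₀`.
-/

attribute [local instance] Ultrafilter.add

open Filter Metric

structure IsFiniteSumTower {M : Type*} [Add M] (a : ℕ → M) (A : ℕ → Set M) : Prop where
  antitone : Antitone A
  mem : ∀ k, a k ∈ A k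
  add_mem : ∀ k, ∀ m ∈ A (k + 1), a k + m ∈ A k

theorem Ultrafilter.exists_isFiniteSumTower {M : Type*} [AddSemigroup M] {p : Ultrafilter M}
    (hp : p + p = p) {B : ℕ → Set M} (hB : ∀ k, B k ∈ p) {R : M → Set M}
    (hR : ∀ b, R b ∈ p) :
    ∃ a A, IsFiniteSumTower a A ∧ (∀ k, A k ⊆ B k) ∧ ∀ k, a (k + 1) ∈ R (a k) := by
  have : Nonempty M := ⟨(p.nonempty_of_mem univ_mem).some⟩
  have pick : ∀ S ∈ p, ∃ b ∈ S, {m | b + m ∈ S} ∈ p := fun S hS =>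
    p.nonempty_of_mem (inter_mem hS (by rwa [← hp] at hS : S ∈ p + p))
  choose! b hb_mem hb_add using pick
  let A : ℕ → Set M := fun k =>
    Nat.rec (B 0) (fun k S => S ∩ {m | b S + m ∈ S} ∩ B (k + 1) ∩ R (b S)) k
  have hA_succ : ∀ k, A (k + 1) = A k ∩ {m | b (A k) + m ∈ A k} ∩ B (k + 1) ∩ R (b (A k)) :=
    fun _ => rfl
  have hA_mem : ∀ k, A k ∈ p := by
    intro k
    induction k with
    | zero => exact hB 0
    | succ k ih =>
      rw [hA_succ]
      exact inter_mem (inter_mem (inter_mem ih (hb_add _ ih)) (hB _)) (hR _)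
  refine ⟨fun k => b (A k), A, ⟨?_, fun k => hb_mem _ (hA_mem k), ?_⟩, ?_, ?_⟩
  · refine antitone_nat_of_succ_le fun k m hm => ?_
    rw [hA_succ] at hm
    exact hm.1.1.1
  · intro k m hm
    rw [hA_succ] at hm
    exact hm.1.1.2
  · rintro (_ | k) m hm
    · exact hm
    · rw [hA_succ] at hm
      exact hm.1.2
  · intro k
    have h := hb_mem _ (hA_mem (k + 1))
    rw [hA_succ] at h
    exact h.2

theorem IsFiniteSumTower.mem_of_coe_eq_sum {a : ℕ → ℕ+} {A : ℕ → Set ℕ+}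
    (h : IsFiniteSumTower a A) {α : Finset ℕ} (hα : α.Nonempty) {k : ℕ}
    (hk : ∀ i ∈ α, k ≤ i) {m : ℕ+} (hm : (m : ℕ) = ∑ i ∈ α, (a i : ℕ)) : m ∈ A k := by
  induction α using Finset.induction_on_min generalizing k m with
  | empty => exact absurd hα Finset.not_nonempty_empty
  | insert i s hlt ih =>
    have hki : k ≤ i := hk i (Finset.mem_insert_self i s)
    have hi : i ∉ s := fun hi => lt_irrefl i (hlt i hi)
    rw [Finset.sum_insert hi] at hm
    rcases s.eq_empty_or_nonempty with rfl | hs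
    · have hm_eq : m = a i := PNat.coe_injective (by simpa using hm)
      exact hm_eq ▸ h.antitone hki (h.mem i)
    · let m' : ℕ+ := ⟨∑ j ∈ s, (a j : ℕ), Finset.sum_pos (fun j _ => (a j).pos) hs⟩
      have hm' : m' ∈ A (i + 1) := ih hs (fun j hj => hlt j hj) rfl
      have hm_eq : m = a i + m' := PNat.coe_injective (by rw [PNat.add_coe]; exact hm)
      exact hm_eq ▸ h.antitone hki (h.add_mem i m' hm')

theorem PNat.Ioi_mem_of_add_self {p : Ultrafilter ℕ+} (hp : p + p = p) (b : ℕ+) :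
    Set.Ioi b ∈ p := by
  by_contra h
  rw [← Ultrafilter.compl_mem_iff_notMem, Set.compl_Ioi] at h
  obtain ⟨a, -, rfl⟩ := Ultrafilter.eq_pure_of_finite_mem (Set.finite_Iic b) h
  have haa : a + a ∈ ({a} : Set ℕ+) := by
    change {a} ∈ (pure a + pure a : Ultrafilter ℕ+)
    rw [hp]
    exact Ultrafilter.mem_pure.mpr rfl
  exact (lt_add_right a a).ne' haa

theorem ip_limit_of_idempotent_ultrafilter_limit_general {X : Type*} [MetricSpace X]
    (p : Ultrafilter ℕ+) (hp : p + p = p)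
    (x : ℕ+ → X) (x₀ : X)
    (hlim : ∀ U : Set X, IsOpen U → x₀ ∈ U → {n : ℕ+ | x n ∈ U} ∈ p) :
    ∃ n : ℕ → ℕ+, StrictMono n ∧
      ∀ ε : ℝ, 0 < ε → ∃ N : ℕ, ∀ α : Finset ℕ, α.Nonempty → (∀ i ∈ α, N ≤ i) →
        ∀ m : ℕ+, (m : ℕ) = ∑ i ∈ α, (n i : ℕ) → dist (x m) x₀ < ε := by
  have hball : ∀ k : ℕ, x ⁻¹' ball x₀ (1 / (k + 1)) ∈ p := fun k =>
    hlim _ isOpen_ball (mem_ball_self Nat.one_div_pos_of_nat)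
  obtain ⟨n, A, hA, hAB, hn⟩ :=
    p.exists_isFiniteSumTower hp hball (PNat.Ioi_mem_of_add_self hp)
  refine ⟨n, strictMono_nat_of_lt_succ hn, fun ε hε => ?_⟩
  obtain ⟨N, hN⟩ := exists_nat_one_div_lt hε
  exact ⟨N, fun α hα hαN m hm =>
    (hAB N (hA.mem_of_coe_eq_sum hα hαN hm)).trans hN⟩

/-- If `(X,d)` is a compact metric space, `p` an idempotent ultrafilter on
the positive natural numbers and `(xₙ)` a sequence in `X` with `p`-lim `xₙ = x₀`, then there
is an increasing sequence `(nᵢ)` of positive natural numbers such that the IP-limit of `x`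
along the finite sums of `(nᵢ)` is `x₀`: for every `ε > 0` there is `N` such that
`d(x_{n_α}, x₀) < ε` for every nonempty finite `α ⊆ ℕ` with `min α ≥ N`, where
`n_α = Σ_{i ∈ α} nᵢ`. -/
theorem ip_limit_of_idempotent_ultrafilter_limit {X : Type*} [MetricSpace X]
    [CompactSpace X] (p : Ultrafilter ℕ+) (hp : p + p = p)
    (x : ℕ+ → X) (x₀ : X)
    (hlim : ∀ U : Set X, IsOpen U → x₀ ∈ U → {n : ℕ+ | x n ∈ U} ∈ p) :
    ∃ n : ℕ → ℕ+, StrictMono n ∧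
      ∀ ε : ℝ, 0 < ε → ∃ N : ℕ, ∀ α : Finset ℕ, α.Nonempty → (∀ i ∈ α, N ≤ i) →
        ∀ m : ℕ+, (m : ℕ) = ∑ i ∈ α, (n i : ℕ) → dist (x m) x₀ < ε :=
  ip_limit_of_idempotent_ultrafilter_limit_general p hp x x₀ hlim
end

section
/- Let S be a compact metric Abelian semitopological semigroup with multiplication jointly continuous at points of I(S) × S, let s ∈ I(S), and let P ∈ ℤ[x] with P(0)=0 and deg P = d ≥ 1. Let p be an idempotent ultrafilter on ℕ and assume that for each j = 1,…,d−1 there exists r_j ≥ 1 with p-lim_{n∈ℕ} s^{r_j n^j} = 1. Then p-lim_{n∈ℕ} s^{P(n)} is an idempotent of S. -/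
open Filter Topology

attribute [local instance] Ultrafilter.add

/-!
Let `f n = s ^ P(n)` and `L m = p-lim_n f (m + n)`; since `p + p = p`, `p-lim_m L m = t`.
The exponent sequences `e` with `p-lim s ^ e(n) = 1` form an additive group (for negation:
`p-lim s ^ (-e(n))` exists by compactness, and joint continuity at `1` forces it to be `1`),
which contains `r_j n ^ j` for `1 ≤ j < d`. For `m` divisible by every `r_j`, which holds for
`p`-almost all `m`, the exponent `P(n + m) - P(n) - P(m)` is a polynomial in `n` of degree `< d`
without constant term whose coefficients are divisible by `m`, so it lies in that group and
`L m = s ^ P(m) * t`. Passing to the `p`-limit in `m` gives `t * t = t`.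
-/

theorem Ultrafilter.exists_tendsto {ι X : Type*} [TopologicalSpace X] [CompactSpace X]
    (p : Ultrafilter ι) (g : ι → X) : ∃ x, Tendsto g p (𝓝 x) :=
  ⟨(p.map g).lim, (p.map g).le_nhds_lim⟩

theorem Ultrafilter.eventually_dvd_of_add_self {p : Ultrafilter ℕ} (hp : p + p = p) {q : ℕ}
    (hq : q ≠ 0) : ∀ᶠ n in p, q ∣ n := by
  have : NeZero q := ⟨hq⟩
  obtain ⟨a, ha⟩ := (p.map ((↑) : ℕ → ZMod q)).eq_pure_of_finite
  have h : ∀ᶠ n : ℕ in p, (n : ZMod q) = a :=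
    show {a} ∈ p.map ((↑) : ℕ → ZMod q) by rw [ha]; exact Filter.singleton_mem_pure
  have h2 : ∀ᶠ m : ℕ in p, ∀ᶠ n : ℕ in p, ((m + n : ℕ) : ZMod q) = a :=
    (Ultrafilter.eventually_add p p _).mp (by rw [hp]; exact h)
  obtain ⟨m, hm, hmn⟩ := (h.and h2).exists
  obtain ⟨n, hmn, hn⟩ := (hmn.and h).exists
  have ha0 : a = 0 := by
    push_cast at hmn
    rw [hm, hn] at hmn
    exact add_eq_left.mp hmn
  exact h.mono fun n hn => (ZMod.natCast_eq_zero_iff n q).mp (hn.trans ha0)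

theorem Ultrafilter.tendsto_of_forall_tendsto_add {M X : Type*} [Add M] [TopologicalSpace X]
    [RegularSpace X] {p : Ultrafilter M} (hp : p + p = p) {f L : M → X} {t : X}
    (hf : Tendsto f p (𝓝 t)) (hL : ∀ m, Tendsto (fun n => f (m + n)) p (𝓝 (L m))) :
    Tendsto L p (𝓝 t) := by
  rw [(closed_nhds_basis t).tendsto_right_iff]
  rintro V ⟨hV, hVc⟩
  have h := hf.eventually_mem hV
  rw [← hp, Ultrafilter.eventually_add] at h
  exact h.mono fun m hm => hVc.mem_of_tendsto (hL m) hm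

theorem Polynomial.eval_add_sub_eval {R : Type*} [CommRing R] (P : Polynomial R) (m x : R) :
    P.eval (m + x) - P.eval x = P.eval m - P.eval 0 +
      ∑ i ∈ Finset.range P.natDegree,
        ((hasseDeriv (i + 1) P).eval m - (hasseDeriv (i + 1) P).eval 0) * x ^ (i + 1) := by
  have hsum : ∀ r : R, P.eval (r + x) =
      ∑ i ∈ Finset.range (P.natDegree + 1), (hasseDeriv i P).eval r * x ^ i := fun r => by
    rw [add_comm, ← taylor_eval, eval_eq_sum_range, natDegree_taylor]
    simp only [taylor_coeff]
  have h0 := hsum 0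
  rw [zero_add] at h0
  rw [hsum, h0, ← Finset.sum_sub_distrib, Finset.sum_range_succ']
  simp only [hasseDeriv_zero, LinearMap.id_apply, pow_zero, mul_one, sub_mul,
    Finset.sum_sub_distrib]
  ring

theorem Polynomial.eval_add_sub_eval_mem {ι : Type*} {G : AddSubgroup (ι → ℤ)}
    (P : Polynomial ℤ) (x : ι → ℤ) (m : ℤ)
    (hG : ∀ j, 1 ≤ j → j < P.natDegree → ∃ r, r ∣ m ∧ (fun i => r * x i ^ j) ∈ G) :
    (fun i => P.eval (m + x i) - P.eval (x i) - (P.eval m - P.eval 0)) ∈ G := by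
  simp_rw [P.eval_add_sub_eval, add_sub_cancel_left, ← Finset.sum_fn]
  refine G.sum_mem fun k hk => ?_
  set D := hasseDeriv (k + 1) P
  rcases (Nat.succ_le_of_lt (Finset.mem_range.1 hk)).lt_or_eq with hlt | heq
  · obtain ⟨r, hrm, hr⟩ := hG (k + 1) k.succ_pos hlt
    obtain ⟨c, hc⟩ := hrm.trans (by simpa using sub_dvd_eval_sub m 0 D)
    convert G.zsmul_mem hr c using 1
    ext i
    simp only [hc, Pi.smul_apply, Int.zsmul_eq_mul]
    ring
  · have hD : D = C (D.coeff 0) :=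
      eq_C_of_natDegree_le_zero ((natDegree_hasseDeriv_le P _).trans (by omega))
    rw [hD]
    simp only [eval_C, sub_self, zero_mul]
    exact G.zero_mem

section ExponentsTendstoOne

variable {ι S : Type*} [Monoid S] [TopologicalSpace S]

theorem tendsto_mul_of_tendsto_one {l : Filter ι} {a b : ι → S} {β : S}
    (hmul : ContinuousAt (fun q : S × S => q.1 * q.2) (1, β))
    (ha : Tendsto a l (𝓝 1)) (hb : Tendsto b l (𝓝 β)) :
    Tendsto (fun i => a i * b i) l (𝓝 β) := by
  simpa [Function.comp_def] using hmul.tendsto.comp (ha.prodMk_nhds hb)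

variable [T2Space S] [CompactSpace S]

def exponentsTendstoOne (hmul : ∀ x : S, ContinuousAt (fun q : S × S => q.1 * q.2) (1, x))
    (u : Sˣ) (p : Ultrafilter ι) : AddSubgroup (ι → ℤ) where
  carrier := {e | Tendsto (fun i => ((u ^ e i : Sˣ) : S)) p (𝓝 1)}
  zero_mem' := by simp
  add_mem' ha hb := by simpa [zpow_add] using tendsto_mul_of_tendsto_one (hmul 1) ha hb
  neg_mem' {e} he := by
    obtain ⟨β, hβ⟩ := p.exists_tendsto fun i => ((u ^ (-e i) : Sˣ) : S)
    have h1 : Tendsto (fun _ : ι => (1 : S)) p (𝓝 β) := by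
      simpa [← Units.val_mul, ← zpow_add] using tendsto_mul_of_tendsto_one (hmul β) he hβ
    rwa [tendsto_nhds_unique h1 tendsto_const_nhds] at hβ

theorem tendsto_zpow_of_sub_mem_exponentsTendstoOne
    {hmul : ∀ x : S, ContinuousAt (fun q : S × S => q.1 * q.2) (1, x)} {u : Sˣ}
    {p : Ultrafilter ι} {a b : ι → ℤ} {c : ℤ} {t : S}
    (hc : Continuous fun z : S => ((u ^ c : Sˣ) : S) * z)
    (hab : (fun i => b i - a i - c) ∈ exponentsTendstoOne hmul u p)
    (ha : Tendsto (fun i => ((u ^ a i : Sˣ) : S)) p (𝓝 t)) :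
    Tendsto (fun i => ((u ^ b i : Sˣ) : S)) p (𝓝 ((u ^ c : Sˣ) * t)) := by
  refine ((hc.tendsto t).comp (tendsto_mul_of_tendsto_one (hmul t) hab ha)).congr fun i => ?_
  simp only [Function.comp_apply, ← Units.val_mul, ← zpow_add]
  congr 2
  ring

end ExponentsTendstoOne

theorem plim_pow_poly_isIdempotent_general {S : Type*} [CommMonoid S] [MetricSpace S]
    [CompactSpace S]
    (hl : ∀ a : S, Continuous fun z : S => a * z)
    (hr : ∀ a : S, Continuous fun z : S => z * a)
    (hjoint : ∀ i x : S, IsUnit i → ContinuousAt (fun q : S × S => q.1 * q.2) (i, x))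
    (s : S) (hs : IsUnit s) (P : Polynomial ℤ) (d : ℕ)
    (hP0 : P.eval 0 = 0) (hd : P.natDegree = d)
    (p : Ultrafilter ℕ) (hp : p + p = p)
    (hrig : ∀ j : ℕ, 1 ≤ j → j ≤ d - 1 →
      ∃ r : ℕ, 1 ≤ r ∧ Tendsto (fun n : ℕ => s ^ (r * n ^ j)) ↑p (𝓝 (1 : S)))
    (t : S) (ht : Tendsto (fun n : ℕ => ((hs.unit ^ (P.eval (n : ℤ)) : Sˣ) : S)) ↑p (𝓝 t)) :
    t * t = t := by
  set u := hs.unit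
  set G := exponentsTendstoOne (fun x => hjoint 1 x isUnit_one) u p
  choose! r hr_pos hr_lim using hrig
  have hmon : ∀ j, 1 ≤ j → j ≤ d - 1 → (fun n : ℕ => (r j : ℤ) * (n : ℤ) ^ j) ∈ G :=
    fun j hj1 hj2 => (hr_lim j hj1 hj2).congr fun n => by
      dsimp only
      rw [← Nat.cast_pow, ← Nat.cast_mul, zpow_natCast, Units.val_pow_eq_pow_val, hs.unit_spec]
  choose L hL using fun m : ℕ =>
    p.exists_tendsto fun n => ((u ^ P.eval ((m + n : ℕ) : ℤ) : Sˣ) : S)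
  have hLt : Tendsto L p (𝓝 t) := Ultrafilter.tendsto_of_forall_tendsto_add hp ht hL
  have hLm : ∀ m : ℕ, (∀ j ∈ Finset.Icc 1 (d - 1), r j ∣ m) →
      L m = (u ^ P.eval (m : ℤ) : Sˣ) * t := by
    intro m hm
    have hE := P.eval_add_sub_eval_mem (G := G) (fun n : ℕ => (n : ℤ)) m fun j hj1 hj2 =>
      ⟨r j, Int.natCast_dvd_natCast.2 (hm j (Finset.mem_Icc.2 ⟨hj1, by omega⟩)),
        hmon j hj1 (by omega)⟩
    rw [hP0, sub_zero] at hE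
    refine tendsto_nhds_unique (hL m) ?_
    simpa only [Nat.cast_add] using tendsto_zpow_of_sub_mem_exponentsTendstoOne (hl _) hE ht
  have hdvd : ∀ᶠ m : ℕ in p, ∀ j ∈ Finset.Icc 1 (d - 1), r j ∣ m :=
    (Filter.eventually_all_finset _).2 fun j hj =>
      p.eventually_dvd_of_add_self hp
        (Nat.one_le_iff_ne_zero.mp (hr_pos j (Finset.mem_Icc.1 hj).1 (Finset.mem_Icc.1 hj).2))
  exact tendsto_nhds_unique (((hr t).tendsto t).comp ht) (hLt.congr' (hdvd.mono hLm))

/-- Let `S` be a compact metric Abelian semitopological semigroup (here: a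
commutative monoid, with separately continuous multiplication) with multiplication jointly
continuous at points of `I(S) × S`, let `s ∈ I(S)`, and let `P ∈ ℤ[x]` with `P(0) = 0` and
`deg P = d ≥ 1`. Let `p` be an idempotent ultrafilter on `ℕ` such that for each
`j = 1,…,d−1` there is `r_j ≥ 1` with `p-lim s^{r_j n^j} = 1`. Then `p-lim s^{P(n)}`
is an idempotent of `S`. -/
theorem plim_pow_poly_isIdempotent {S : Type*} [CommMonoid S] [MetricSpace S]
    [CompactSpace S]
    (hl : ∀ a : S, Continuous fun z : S => a * z)
    (hr : ∀ a : S, Continuous fun z : S => z * a)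
    (hjoint : ∀ i x : S, IsUnit i → ContinuousAt (fun q : S × S => q.1 * q.2) (i, x))
    (s : S) (hs : IsUnit s) (P : Polynomial ℤ) (d : ℕ)
    (hP0 : P.eval 0 = 0) (hd : P.natDegree = d) (hd1 : 1 ≤ d)
    (p : Ultrafilter ℕ) (hp : p + p = p)
    (hrig : ∀ j : ℕ, 1 ≤ j → j ≤ d - 1 →
      ∃ r : ℕ, 1 ≤ r ∧ Tendsto (fun n : ℕ => s ^ (r * n ^ j)) ↑p (𝓝 (1 : S)))
    (t : S) (ht : Tendsto (fun n : ℕ => ((hs.unit ^ (P.eval (n : ℤ)) : Sˣ) : S)) ↑p (𝓝 t)) :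
    t * t = t :=
  plim_pow_poly_isIdempotent_general hl hr hjoint s hs P d hP0 hd p hp hrig t ht
end

section
/- (p-limit van der Corput lemma) Let H be a Hilbert space, (x_n) a bounded sequence in H, and p an idempotent ultrafilter on ℕ. If p-lim_{h∈ℕ} ( p-lim_{n∈ℕ} ⟨x_{n+h}, x_n⟩ ) = 0, then p-lim_{n∈ℕ} x_n = 0 in the weak topology. -/
/-!
Let `L = p-lim ⟨xₙ, g⟩`, which exists because `⟨xₙ, g⟩` is bounded. For every `K` and `ε > 0`,
idempotence of `p` produces shifts `a₁, …, a_K` and an `n` such that every `⟨x_{n+aᵢ}, g⟩` is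
`ε`-close to `L` and every cross term `⟨x_{n+aⱼ}, x_{n+aᵢ}⟩` has norm `< ε`. The vector
`s = ∑ᵢ x_{n+aᵢ}` then satisfies `K‖L‖ ≤ Kε + ‖s‖‖g‖` and `‖s‖² ≤ KC² + K²ε`, hence
`‖L‖ ≤ ε + ‖g‖ √(C²/K + ε)`, and `ε = 1/K → 0` forces `L = 0`.
-/

open Filter Topology

attribute [local instance] Ultrafilter.add

theorem Ultrafilter.exists_tendsto_of_isBounded {α E : Type*} [PseudoMetricSpace E]
    [ProperSpace E] (p : Ultrafilter α) {f : α → E} (hf : Bornology.IsBounded (Set.range f)) :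
    ∃ L, Tendsto f p (𝓝 L) := by
  obtain ⟨L, -, hL⟩ := hf.isCompact_closure.ultrafilter_le_nhds (p.map f) <| by
    rw [Ultrafilter.coe_map, le_principal_iff]
    exact mem_map.mpr (univ_mem' fun a => subset_closure ⟨a, rfl⟩)
  exact ⟨L, hL⟩

theorem Filter.eventually_eventually_mem_of_tendsto {α β X : Type*} [TopologicalSpace X]
    {F : Filter α} {G : Filter β} {f : β → α → X} {c : β → X} {a : X} {U : Set X}
    (hf : ∀ d, Tendsto (f d) F (𝓝 (c d))) (hc : Tendsto c G (𝓝 a)) (hU : IsOpen U) (ha : a ∈ U) :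
    ∀ᶠ d in G, ∀ᶠ m in F, f d m ∈ U :=
  (hc.eventually_mem (hU.mem_nhds ha)).mono fun d hd => (hf d).eventually_mem (hU.mem_nhds hd)

theorem Ultrafilter.eventually_eventually_add_of_add_self {M : Type*} [AddCommMagma M]
    {p : Ultrafilter M} (hp : p + p = p) {P : M → Prop} (h : ∀ᶠ m in p, P m) :
    ∀ᶠ b in p, ∀ᶠ n in p, P (n + b) := by
  rw [← hp, eventually_add] at h
  simpa only [add_comm] using h

def IsGoodShift {M : Type*} [Add M] (S : M → Prop) (R : M → M → Prop) (l : List M) (n : M) :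
    Prop :=
  (∀ a ∈ l, S (n + a)) ∧ l.Pairwise fun a b => R (n + a) (n + b)

namespace IsGoodShift

variable {M : Type*} [AddCommSemigroup M] {S : M → Prop} {R : M → M → Prop}

theorem cons_map_add_iff {l : List M} {b n : M} :
    IsGoodShift S R (b :: l.map (b + ·)) n ↔
      S (n + b) ∧ (∀ a ∈ l, R (n + b) (n + b + a)) ∧ IsGoodShift S R l (n + b) := by
  simp only [IsGoodShift, List.forall_mem_cons, List.forall_mem_map, List.pairwise_cons,
    List.pairwise_map, add_assoc]
  tauto

/- The list grows as `b :: (b + l)`: the condition on `n` for the new list is a condition on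
`n + b` only, and idempotence of `p` lets `b` be chosen so that it holds for `p`-many `n`. -/
theorem exists_of_add_self {p : Ultrafilter M} (hp : p + p = p) (hS : ∀ᶠ m in p, S m)
    (hSR : ∀ a, S a → ∀ᶠ m in p, R m (m + a)) (K : ℕ) :
    ∃ l : List M, l.length = K ∧ (∀ a ∈ l, S a) ∧ ∀ᶠ n in p, IsGoodShift S R l n := by
  induction K with
  | zero => exact ⟨[], rfl, by simp, Eventually.of_forall fun n => by simp [IsGoodShift]⟩
  | succ K ih =>
    obtain ⟨l, hlen, hlS, hl⟩ := ih
    have hnext : ∀ᶠ m in p, S m ∧ (∀ a ∈ l, R m (m + a)) ∧ IsGoodShift S R l m :=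
      hS.and (((eventually_all_finite l.finite_toSet).mpr fun a ha => hSR a (hlS a ha)).and hl)
    obtain ⟨b, hbS, hb, hbnext⟩ :=
      (hS.and (hl.and (Ultrafilter.eventually_eventually_add_of_add_self hp hnext))).exists
    refine ⟨b :: l.map (b + ·), by simp [hlen], ?_,
      hbnext.mono fun n hn => cons_map_add_iff.mpr hn⟩
    simp only [List.forall_mem_cons, List.forall_mem_map]
    exact ⟨hbS, hb.1⟩

theorem exists_eventually_of_add_self {p : Ultrafilter M} (hp : p + p = p)
    (hS : ∀ᶠ m in p, S m) (hR : ∀ᶠ d in p, ∀ᶠ m in p, R m (m + d)) (K : ℕ) :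
    ∃ l : List M, l.length = K ∧ ∀ᶠ n in p, IsGoodShift S R l n := by
  obtain ⟨l, hlen, -, hl⟩ := exists_of_add_self (R := R) hp (hS.and hR) (fun a ha => ha.2) K
  exact ⟨l, hlen, hl.mono fun n hn => ⟨fun a ha => (hn.1 a ha).1, hn.2⟩⟩

end IsGoodShift

theorem List.norm_sum_sub_length_smul_le {F : Type*} [SeminormedAddCommGroup F] {l : List F}
    {L : F} {ε : ℝ} (h : ∀ a ∈ l, ‖a - L‖ ≤ ε) : ‖l.sum - l.length • L‖ ≤ l.length * ε := by
  induction l with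
  | nil => simp
  | cons a l ih =>
    rw [List.forall_mem_cons] at h
    rw [List.sum_cons, List.length_cons, succ_nsmul', Nat.cast_succ, add_sub_add_comm]
    linarith [norm_add_le (a - L) (l.sum - l.length • L), ih h.2, h.1]

section InnerProductSpace

variable {𝕜 E : Type*} [RCLike 𝕜] [SeminormedAddCommGroup E] [InnerProductSpace 𝕜 E]

local notation "⟪" x ", " y "⟫" => inner 𝕜 x y

theorem norm_inner_list_sum_sub_le {g : E} {L : 𝕜} {vs : List E} {ε : ℝ}
    (h : ∀ v ∈ vs, ‖⟪v, g⟫ - L‖ ≤ ε) : ‖⟪vs.sum, g⟫ - vs.length * L‖ ≤ vs.length * ε := by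
  rw [← innerSLFlip_apply_apply, map_list_sum, ← nsmul_eq_mul]
  simpa using List.norm_sum_sub_length_smul_le (l := vs.map (innerSLFlip 𝕜 g)) (by simpa using h)

theorem norm_list_sum_sq_le {vs : List E} {C ε : ℝ} (hC : ∀ v ∈ vs, ‖v‖ ≤ C)
    (hε : vs.Pairwise fun u w => ‖⟪u, w⟫‖ ≤ ε) :
    ‖vs.sum‖ ^ 2 ≤ vs.length * C ^ 2 + vs.length * (vs.length - 1) * ε := by
  induction vs with
  | nil => simp
  | cons v vs ih =>
    rw [List.forall_mem_cons] at hC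
    rw [List.pairwise_cons] at hε
    have hv : ‖v‖ ^ 2 ≤ C ^ 2 := pow_le_pow_left₀ (norm_nonneg v) hC.1 2
    have hcross : RCLike.re ⟪v, vs.sum⟫ ≤ vs.length * ε := by
      refine (RCLike.re_le_norm _).trans ?_
      rw [← innerSL_apply_apply, map_list_sum]
      simpa using List.norm_sum_sub_length_smul_le (l := vs.map (innerSL 𝕜 v)) (L := 0)
        (by simpa using hε.1)
    rw [List.sum_cons, norm_add_sq (𝕜 := 𝕜), List.length_cons, Nat.cast_succ]
    linarith [ih hC.2 hε.2]

theorem norm_le_of_tendsto_inner_of_add_self {x : ℕ → E} {C : ℝ} (hbdd : ∀ n, ‖x n‖ ≤ C)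
    {p : Ultrafilter ℕ} (hp : p + p = p)
    (hR : ∀ δ > 0, ∀ᶠ d in p, ∀ᶠ m in p, ‖⟪x (m + d), x m⟫‖ < δ)
    {g : E} {L : 𝕜} (hL : Tendsto (fun n => ⟪x n, g⟫) p (𝓝 L))
    {K : ℕ} (hK : 0 < K) {ε : ℝ} (hε : 0 < ε) :
    ‖L‖ ≤ ε + ‖g‖ * √(C ^ 2 / K + ε) := by
  have hS : ∀ᶠ m in p, ‖⟪x m, g⟫ - L‖ < ε := by
    simpa only [dist_eq_norm] using hL.eventually (Metric.ball_mem_nhds L hε)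
  obtain ⟨l, rfl, hl⟩ := IsGoodShift.exists_eventually_of_add_self
    (R := fun a b => ‖⟪x b, x a⟫‖ < ε) hp hS (hR ε hε) K
  obtain ⟨n, hnS, hnR⟩ := hl.exists
  set vs := l.map fun a => x (n + a)
  have hK' : (0 : ℝ) < l.length := by exact_mod_cast hK
  have hmean : ‖⟪vs.sum, g⟫ - l.length * L‖ ≤ l.length * ε := by
    simpa [vs] using norm_inner_list_sum_sub_le (vs := vs)
      (by simpa [vs] using fun a ha => (hnS a ha).le)
  have hsum : ‖vs.sum‖ ≤ l.length * √(C ^ 2 / l.length + ε) := by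
    have hsq := norm_list_sum_sq_le (vs := vs) (C := C) (ε := ε)
      (by simpa [vs] using fun a _ => hbdd (n + a))
      (List.pairwise_map.mpr (hnR.imp fun h => by rw [norm_inner_symm (𝕜 := 𝕜)]; exact h.le))
    refine (pow_le_pow_iff_left₀ (norm_nonneg _) (by positivity) two_ne_zero).mp ?_
    rw [mul_pow, Real.sq_sqrt (by positivity)]
    refine hsq.trans ?_
    simp only [vs, List.length_map]
    field_simp
    nlinarith
  have hcs : ‖⟪vs.sum, g⟫‖ ≤ ‖vs.sum‖ * ‖g‖ := norm_inner_le_norm _ _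
  have htri := norm_sub_le ⟪vs.sum, g⟫ (⟪vs.sum, g⟫ - (l.length : 𝕜) * L)
  rw [sub_sub_cancel, norm_mul, RCLike.norm_natCast] at htri
  refine le_of_mul_le_mul_left ?_ hK'
  nlinarith [norm_nonneg g]

end InnerProductSpace

theorem vanDerCorput_plim_general {H : Type*} [NormedAddCommGroup H] [InnerProductSpace ℂ H]
    (x : ℕ → H) (C : ℝ) (hbdd : ∀ n, ‖x n‖ ≤ C)
    (p : Ultrafilter ℕ) (hp : p + p = p)
    (c : ℕ → ℂ)
    (hc : ∀ h : ℕ, Tendsto (fun n : ℕ => (inner ℂ (x (n + h)) (x n) : ℂ)) ↑p (𝓝 (c h)))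
    (hc0 : Tendsto c ↑p (𝓝 (0 : ℂ))) :
    ∀ g : H, Tendsto (fun n : ℕ => (inner ℂ (x n) g : ℂ)) ↑p (𝓝 (0 : ℂ)) := by
  intro g
  obtain ⟨L, hL⟩ := p.exists_tendsto_of_isBounded (f := fun n => inner ℂ (x n) g) <|
    isBounded_iff_forall_norm_le.mpr ⟨C * ‖g‖, Set.forall_mem_range.mpr fun n =>
      (norm_inner_le_norm _ _).trans (mul_le_mul_of_nonneg_right (hbdd n) (norm_nonneg g))⟩
  have hR : ∀ δ > 0, ∀ᶠ d in p, ∀ᶠ m in p, ‖inner ℂ (x (m + d)) (x m)‖ < δ := fun δ hδ => by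
    simpa using
      eventually_eventually_mem_of_tendsto hc hc0 Metric.isOpen_ball (Metric.mem_ball_self hδ)
  have hbound : Tendsto (fun K : ℕ => 1 / (K : ℝ) + ‖g‖ * √(C ^ 2 / K + 1 / K)) atTop (𝓝 0) := by
    have : Continuous fun t : ℝ => t + ‖g‖ * √(C ^ 2 * t + t) := by fun_prop
    simpa [Function.comp_def, div_eq_mul_inv] using
      (this.tendsto 0).comp tendsto_one_div_atTop_nhds_zero_nat
  have hL0 : ‖L‖ ≤ 0 := ge_of_tendsto hbound <| (eventually_gt_atTop 0).mono fun K hK =>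
    norm_le_of_tendsto_inner_of_add_self hbdd hp hR hL hK (by positivity)
  rwa [norm_le_zero_iff.mp hL0] at hL

/-- `p`-limit van der Corput lemma. Let `H` be a Hilbert space, `(xₙ)` a
bounded sequence in `H`, and `p` an idempotent ultrafilter on `ℕ`. If the iterated
`p`-limit `p-lim_h (p-lim_n ⟨x_{n+h}, x_n⟩)` equals `0`, then `p-lim xₙ = 0` in the weak
topology, i.e. `p-lim ⟨xₙ, g⟩ = 0` for every `g ∈ H`. -/
theorem vanDerCorput_plim {H : Type*} [NormedAddCommGroup H] [InnerProductSpace ℂ H]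
    [CompleteSpace H] (x : ℕ → H) (C : ℝ) (hbdd : ∀ n, ‖x n‖ ≤ C)
    (p : Ultrafilter ℕ) (hp : p + p = p)
    (c : ℕ → ℂ)
    (hc : ∀ h : ℕ, Tendsto (fun n : ℕ => (inner ℂ (x (n + h)) (x n) : ℂ)) ↑p (𝓝 (c h)))
    (hc0 : Tendsto c ↑p (𝓝 (0 : ℂ))) :
    ∀ g : H, Tendsto (fun n : ℕ => (inner ℂ (x n) g : ℂ)) ↑p (𝓝 (0 : ℂ)) :=
  vanDerCorput_plim_general x C hbdd p hp c hc hc0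
end

section
/- Let U be a unitary operator on a Hilbert space H and let p be an idempotent ultrafilter on ℕ. Then W := p-lim_{n∈ℕ} U^n (limit in the weak operator topology) is an orthogonal projection, and H decomposes as H = H_r ⊕ H_m, where H_r = {f ∈ H : p-lim U^n f = f} and H_m = {f ∈ H : p-lim U^n f = 0} (limits in the weak topology). -/
/-!
Since `p + p = p`, `p-lim_k Uᵏ f = p-lim_n p-lim_m Uⁿ⁺ᵐ f`, and the inner limit is `Uⁿ (W f)`
because bounded operators are weakly continuous; hence `p-lim_n Uⁿ (W f) = W f`, i.e. `W² = W`.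
As a weak limit of isometries `W` is a contraction, and a contractive idempotent on a Hilbert
space is symmetric: if `W a = a` and `W b = 0` then `‖a‖ = ‖W (a + t b)‖ ≤ ‖a + t b‖` for every
scalar `t`, which forces `⟪a, b⟫ = 0`. The decomposition is `H = {W f = f} ⊕ ker W`, and these
two subspaces are `H_r` and `H_m`.
-/

open Filter Topology

open scoped InnerProductSpace

attribute [local instance] Ultrafilter.add

theorem Ultrafilter.tendsto_of_tendsto_add {M X : Type*} [Add M] [TopologicalSpace X]
    [RegularSpace X] {p q : Ultrafilter M} {c : M → X} {d : M → X} {L : X}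
    (hc : Tendsto c ↑(p + q) (𝓝 L)) (hd : ∀ n, Tendsto (fun m => c (n + m)) q (𝓝 (d n))) :
    Tendsto d p (𝓝 L) := by
  rw [(closed_nhds_basis L).tendsto_right_iff]
  rintro V ⟨hVL, hVclosed⟩
  filter_upwards [(Ultrafilter.eventually_add p q _).1 (hc hVL)] with n hn
  exact hVclosed.mem_of_tendsto (hd n) hn

theorem LinearMap.IsIdempotentElem.existsUnique_fixed_add_ker {R M : Type*} [Ring R]
    [AddCommGroup M] [Module R M] {T : M →ₗ[R] M} (hT : IsIdempotentElem T) (f : M) :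
    ∃! q : M × M, T q.1 = q.1 ∧ T q.2 = 0 ∧ f = q.1 + q.2 := by
  have hTT : ∀ x, T (T x) = T x := fun x => congr($hT.eq x)
  refine ⟨(T f, f - T f), ⟨hTT f, by rw [map_sub, hTT, sub_self], (add_sub_cancel _ _).symm⟩,
    ?_⟩
  rintro ⟨a, b⟩ ⟨ha, hb, rfl⟩
  have hTf : T (a + b) = a := by rw [map_add, ha, hb, add_zero]
  simp only [hTf, add_sub_cancel_left]

section InnerProductSpace

variable {𝕜 E : Type*} [RCLike 𝕜] [NormedAddCommGroup E] [InnerProductSpace 𝕜 E]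

theorem eq_of_tendsto_inner {α : Type*} {l : Filter α} [l.NeBot] {x : α → E} {a b : E}
    (ha : ∀ g, Tendsto (fun n => ⟪x n, g⟫_𝕜) l (𝓝 ⟪a, g⟫_𝕜))
    (hb : ∀ g, Tendsto (fun n => ⟪x n, g⟫_𝕜) l (𝓝 ⟪b, g⟫_𝕜)) : a = b :=
  ext_inner_right 𝕜 fun g => tendsto_nhds_unique (ha g) (hb g)

theorem norm_le_of_tendsto_inner {α : Type*} {l : Filter α} [l.NeBot] {x : α → E} {a : E}
    {C : ℝ} (ha : ∀ g, Tendsto (fun n => ⟪x n, g⟫_𝕜) l (𝓝 ⟪a, g⟫_𝕜))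
    (hC : ∀ᶠ n in l, ‖x n‖ ≤ C) : ‖a‖ ≤ C := by
  have hC0 : 0 ≤ C := by
    obtain ⟨n, hn⟩ := hC.exists
    exact (norm_nonneg _).trans hn
  have hsq : ‖a‖ ^ 2 ≤ C * ‖a‖ := by
    have hle : ‖⟪a, a⟫_𝕜‖ ≤ C * ‖a‖ := by
      refine le_of_tendsto (ha a).norm ?_
      filter_upwards [hC] with n hn
      exact (norm_inner_le_norm _ _).trans (by gcongr)
    rwa [inner_self_eq_norm_sq_to_K, norm_pow, RCLike.norm_ofReal, abs_norm] at hle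
  nlinarith [norm_nonneg a]

theorem tendsto_inner_map_of_tendsto_inner {F : Type*} [NormedAddCommGroup F]
    [InnerProductSpace 𝕜 F] [CompleteSpace E] [CompleteSpace F] (T : E →L[𝕜] F)
    {α : Type*} {l : Filter α} {x : α → E} {a : E}
    (ha : ∀ g, Tendsto (fun n => ⟪x n, g⟫_𝕜) l (𝓝 ⟪a, g⟫_𝕜)) (g : F) :
    Tendsto (fun n => ⟪T (x n), g⟫_𝕜) l (𝓝 ⟪T a, g⟫_𝕜) := by
  simpa only [ContinuousLinearMap.adjoint_inner_right] using ha (T.adjoint g)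

theorem re_inner_eq_zero_of_forall_norm_le_norm_add_smul {a b : E}
    (h : ∀ t : ℝ, ‖a‖ ≤ ‖a + (t : 𝕜) • b‖) : RCLike.re ⟪a, b⟫_𝕜 = 0 := by
  have hquad (t : ℝ) : 0 ≤ ‖b‖ ^ 2 * (t * t) + 2 * RCLike.re ⟪a, b⟫_𝕜 * t + 0 := by
    have hsq := pow_le_pow_left₀ (norm_nonneg a) (h t) 2
    rw [@norm_add_sq 𝕜, inner_smul_right, norm_smul, RCLike.norm_ofReal,
      RCLike.re_ofReal_mul] at hsq
    nlinarith [sq_abs t]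
  have hdisc := discrim_le_zero hquad
  rw [discrim] at hdisc
  nlinarith [sq_nonneg (RCLike.re ⟪a, b⟫_𝕜)]

theorem inner_eq_zero_of_forall_norm_le_norm_add_smul {a b : E}
    (h : ∀ t : 𝕜, ‖a‖ ≤ ‖a + t • b‖) : ⟪a, b⟫_𝕜 = 0 := by
  have hre := re_inner_eq_zero_of_forall_norm_le_norm_add_smul (𝕜 := 𝕜) (a := a)
    (b := (starRingEnd 𝕜 ⟪a, b⟫_𝕜) • b) fun t => by simpa only [smul_smul] using h _
  rw [inner_smul_right, RCLike.conj_mul, ← RCLike.ofReal_pow, RCLike.ofReal_re] at hre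
  exact norm_eq_zero.1 (pow_eq_zero_iff two_ne_zero |>.1 hre)

theorem LinearMap.IsIdempotentElem.isSymmetric_of_norm_apply_le {T : E →ₗ[𝕜] E}
    (hT : IsIdempotentElem T) (hT1 : ∀ x, ‖T x‖ ≤ ‖x‖) : T.IsSymmetric := by
  rw [LinearMap.IsIdempotentElem.isSymmetric_iff_isOrtho_range_ker hT,
    Submodule.isOrtho_iff_inner_eq]
  rintro _ ⟨a, rfl⟩ b hb
  refine inner_eq_zero_of_forall_norm_le_norm_add_smul fun t => ?_
  have hTa : T (T a + t • b) = T a := by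
    rw [map_add, map_smul, LinearMap.mem_ker.1 hb, smul_zero, add_zero, ← Module.End.mul_apply,
      hT.eq]
  simpa only [hTa] using hT1 (T a + t • b)

theorem ContinuousLinearMap.norm_pow_apply_of_inner_map_map {U : E →L[𝕜] E}
    (hU : ∀ x y, ⟪U x, U y⟫_𝕜 = ⟪x, y⟫_𝕜) (n : ℕ) (x : E) :
    ‖(U ^ n) x‖ = ‖x‖ := by
  induction n with
  | zero => rfl
  | succ n ih =>
    rw [pow_succ', mul_apply_eq_comp]
    exact ((U : E →ₗ[𝕜] E).isometryOfInner hU).norm_map _ |>.trans ih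

variable {U W : E →L[𝕜] E} {p : Ultrafilter ℕ}

theorem tendsto_inner_pow_apply_plim [CompleteSpace E] (hp : p + p = p)
    (hW : ∀ f g, Tendsto (fun n => ⟪(U ^ n) f, g⟫_𝕜) p (𝓝 ⟪W f, g⟫_𝕜))
    (f g : E) :
    Tendsto (fun n => ⟪(U ^ n) (W f), g⟫_𝕜) p (𝓝 ⟪W f, g⟫_𝕜) := by
  refine Ultrafilter.tendsto_of_tendsto_add (p := p) (q := p) (hp ▸ hW f g) fun n => ?_
  simpa only [pow_add, mul_apply_eq_comp] using
    tendsto_inner_map_of_tendsto_inner (U ^ n) (hW f) g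

theorem isIdempotentElem_of_tendsto_inner_pow [CompleteSpace E] (hp : p + p = p)
    (hW : ∀ f g, Tendsto (fun n => ⟪(U ^ n) f, g⟫_𝕜) p (𝓝 ⟪W f, g⟫_𝕜)) :
    IsIdempotentElem W :=
  ContinuousLinearMap.ext fun f =>
    eq_of_tendsto_inner (hW (W f)) (tendsto_inner_pow_apply_plim hp hW f)

theorem apply_eq_self_iff_tendsto_inner_pow [CompleteSpace E] (hp : p + p = p)
    (hW : ∀ f g, Tendsto (fun n => ⟪(U ^ n) f, g⟫_𝕜) p (𝓝 ⟪W f, g⟫_𝕜)) (f : E) :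
    W f = f ↔ ∀ g, Tendsto (fun n => ⟪(U ^ n) f, g⟫_𝕜) p (𝓝 ⟪f, g⟫_𝕜) := by
  refine ⟨fun hf => ?_, eq_of_tendsto_inner (hW f)⟩
  simpa only [hf] using tendsto_inner_pow_apply_plim hp hW f

theorem apply_eq_zero_iff_tendsto_inner_pow
    (hW : ∀ f g, Tendsto (fun n => ⟪(U ^ n) f, g⟫_𝕜) p (𝓝 ⟪W f, g⟫_𝕜)) (f : E) :
    W f = 0 ↔ ∀ g, Tendsto (fun n => ⟪(U ^ n) f, g⟫_𝕜) p (𝓝 0) := by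
  refine ⟨fun hf g => ?_, fun h => eq_of_tendsto_inner (hW f) fun g => ?_⟩
  · simpa only [hf, inner_zero_left] using hW f g
  · simpa only [inner_zero_left] using h g

end InnerProductSpace

theorem plim_unitary_orthogonal_projection_general {H : Type*} [NormedAddCommGroup H]
    [InnerProductSpace ℂ H] [CompleteSpace H]
    (U : H →L[ℂ] H)
    (hU : ∀ f g : H, (inner ℂ (U f) (U g) : ℂ) = inner ℂ f g)
    (p : Ultrafilter ℕ) (hp : p + p = p)
    (W : H →L[ℂ] H)
    (hW : ∀ f g : H, Tendsto (fun n : ℕ => (inner ℂ ((U ^ n) f) g : ℂ)) ↑p (𝓝 (inner ℂ (W f) g))) :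
    W.comp W = W ∧ (∀ f g : H, (inner ℂ (W f) g : ℂ) = inner ℂ f (W g)) ∧
      ∀ f : H, ∃! q : H × H,
        (∀ g : H, Tendsto (fun n : ℕ => (inner ℂ ((U ^ n) q.1) g : ℂ)) ↑p (𝓝 (inner ℂ q.1 g))) ∧
        (∀ g : H, Tendsto (fun n : ℕ => (inner ℂ ((U ^ n) q.2) g : ℂ)) ↑p (𝓝 (0 : ℂ))) ∧
        f = q.1 + q.2 := by
  have hWW : IsIdempotentElem W := isIdempotentElem_of_tendsto_inner_pow hp hW
  have hW1 : ∀ f, ‖W f‖ ≤ ‖f‖ := fun f =>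
    norm_le_of_tendsto_inner (hW f) <| .of_forall fun n =>
      (U.norm_pow_apply_of_inner_map_map hU n f).le
  have hWW' : IsIdempotentElem (W : H →ₗ[ℂ] H) :=
    ContinuousLinearMap.IsIdempotentElem.toLinearMap hWW
  refine ⟨hWW, LinearMap.IsIdempotentElem.isSymmetric_of_norm_apply_le hWW' hW1, fun f => ?_⟩
  refine (existsUnique_congr fun q => ?_).1
    (LinearMap.IsIdempotentElem.existsUnique_fixed_add_ker hWW' f)
  exact (apply_eq_self_iff_tendsto_inner_pow hp hW q.1).and
    ((apply_eq_zero_iff_tendsto_inner_pow hW q.2).and .rfl)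

/-- Let `U` be a unitary operator on a Hilbert space `H` and `p` an
idempotent ultrafilter on `ℕ`. If `W = p-lim Uⁿ` in the weak operator topology, then `W` is
an orthogonal projection (idempotent and self-adjoint), and `H` decomposes as
`H = H_r ⊕ H_m` where `H_r = {f : p-lim Uⁿ f = f}` and `H_m = {f : p-lim Uⁿ f = 0}`
(weak limits): every `f ∈ H` is uniquely the sum of an element of `H_r` and an element of
`H_m`. -/
theorem plim_unitary_orthogonal_projection {H : Type*} [NormedAddCommGroup H]
    [InnerProductSpace ℂ H] [CompleteSpace H]
    (U : H →L[ℂ] H)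
    (hU : ∀ f g : H, (inner ℂ (U f) (U g) : ℂ) = inner ℂ f g)
    (hUsurj : Function.Surjective U)
    (p : Ultrafilter ℕ) (hp : p + p = p)
    (W : H →L[ℂ] H)
    (hW : ∀ f g : H, Tendsto (fun n : ℕ => (inner ℂ ((U ^ n) f) g : ℂ)) ↑p (𝓝 (inner ℂ (W f) g))) :
    W.comp W = W ∧ (∀ f g : H, (inner ℂ (W f) g : ℂ) = inner ℂ f (W g)) ∧
      ∀ f : H, ∃! q : H × H,
        (∀ g : H, Tendsto (fun n : ℕ => (inner ℂ ((U ^ n) q.1) g : ℂ)) ↑p (𝓝 (inner ℂ q.1 g))) ∧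
        (∀ g : H, Tendsto (fun n : ℕ => (inner ℂ ((U ^ n) q.2) g : ℂ)) ↑p (𝓝 (0 : ℂ))) ∧
        f = q.1 + q.2 :=
  plim_unitary_orthogonal_projection_general U hU p hp W hW
end

section
/- Let σ be a probability Borel measure on S¹, V_σ the unitary operator on L²(S¹,σ) given by (V_σ f)(z) = z f(z), p an ultrafilter on ℕ, and P ∈ ℤ[x] with P(0)=0. Then p-lim_{n∈ℕ} V_σ^{P(n)} = Id (in the weak operator topology) if and only if p-lim_{n∈ℕ} σ̂(P(n)) = 1, where σ̂(k) = ∫ z^k dσ(z). -/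
/-!
If `σ̂(kₙ) → 1`, then `∫ |z^{kₙ} - 1|² dσ = 2 - 2 Re σ̂(kₙ) → 0`, so `z^{kₙ} → 1` in `L¹(σ)`.
Since the functions `z^{kₙ} - 1` are uniformly bounded, `∫ (z^{kₙ} - 1) h dσ → 0` for bounded
(simple) `h`, hence by density for every `h ∈ L¹(σ)`; take `h = f ḡ`, which is integrable by
Cauchy–Schwarz. The converse is the case `f = g = 1`.
-/

open Filter Topology MeasureTheory

noncomputable instance : MeasurableSpace Circle := borel Circle

instance : BorelSpace Circle := ⟨rfl⟩

lemma Circle.norm_coe_sub_one_sq (w : Circle) : ‖(w : ℂ) - 1‖ ^ 2 = 2 - 2 * (w : ℂ).re := by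
  have hw : Complex.normSq w = 1 := by rw [Complex.normSq_eq_norm_sq, Circle.norm_coe, one_pow]
  rw [← Complex.normSq_eq_norm_sq]
  simp only [Complex.normSq_apply, Complex.sub_re, Complex.sub_im, Complex.one_re,
    Complex.one_im] at hw ⊢
  linear_combination hw

lemma Circle.norm_coe_sub_one_le (w : Circle) : ‖(w : ℂ) - 1‖ ≤ 2 :=
  (norm_sub_le _ _).trans (by rw [Circle.norm_coe, norm_one]; norm_num)

section

variable {α ι : Type*} [MeasurableSpace α] {μ : Measure α} {l : Filter ι}

lemma sq_integral_le_integral_sq [IsProbabilityMeasure μ] {f : α → ℝ} (hf : MemLp f 2 μ) :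
    (∫ x, f x ∂μ) ^ 2 ≤ ∫ x, f x ^ 2 ∂μ := by
  have := ProbabilityTheory.variance_nonneg f μ
  rw [ProbabilityTheory.variance_eq_sub hf] at this
  simp only [Pi.pow_apply] at this
  linarith

lemma MeasureTheory.Integrable.exists_simpleFunc_integral_norm_sub_lt {E : Type*}
    [NormedAddCommGroup E] {f : α → E} (hf : Integrable f μ) {ε : ℝ} (hε : 0 < ε) :
    ∃ φ : SimpleFunc α E, Integrable φ μ ∧ ∫ x, ‖f x - φ x‖ ∂μ < ε := by
  obtain ⟨φ, hlt, hφ⟩ := (memLp_one_iff_integrable.2 hf).exists_simpleFunc_eLpNorm_sub_lt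
    ENNReal.one_ne_top (ENNReal.ofReal_pos.2 hε).ne'
  refine ⟨φ, memLp_one_iff_integrable.1 hφ, ?_⟩
  rwa [eLpNorm_one_eq_lintegral_enorm, ← ofReal_integral_norm_eq_lintegral_enorm
    (hf.sub (memLp_one_iff_integrable.1 hφ)), ENNReal.ofReal_lt_ofReal_iff hε] at hlt

lemma tendsto_integral_norm_mul_norm_of_tendsto_integral_norm {F E : Type*}
    [NormedAddCommGroup F] [NormedAddCommGroup E] {u : ι → α → F} {C : ℝ}
    (hu : ∀ i, Integrable (u i) μ) (hC : ∀ i x, ‖u i x‖ ≤ C)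
    (hlim : Tendsto (fun i => ∫ x, ‖u i x‖ ∂μ) l (𝓝 0)) {h : α → E} (hh : Integrable h μ) :
    Tendsto (fun i => ∫ x, ‖u i x‖ * ‖h x‖ ∂μ) l (𝓝 0) := by
  have hint : ∀ i, Integrable (fun x => ‖u i x‖ * ‖h x‖) μ := fun i =>
    hh.norm.bdd_mul (hu i).norm.aestronglyMeasurable (.of_forall fun x => by simpa using hC i x)
  refine tendsto_order.2 ⟨fun a ha => .of_forall fun i =>
    ha.trans_le (integral_nonneg fun x => by positivity), fun ε hε => ?_⟩
  obtain ⟨δ, hδ, hCδ⟩ := exists_pos_mul_lt hε |C|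
  obtain ⟨φ, hφ, hφδ⟩ := hh.exists_simpleFunc_integral_norm_sub_lt hδ
  obtain ⟨B, hB⟩ := φ.exists_forall_norm_le
  have hsub : Integrable (fun x => ‖h x - φ x‖) μ := (hh.sub hφ).norm
  have hbound : ∀ i, ∫ x, ‖u i x‖ * ‖h x‖ ∂μ
      ≤ |C| * ∫ x, ‖h x - φ x‖ ∂μ + B * ∫ x, ‖u i x‖ ∂μ := by
    intro i
    rw [← integral_const_mul, ← integral_const_mul,
      ← integral_add (hsub.const_mul _) ((hu i).norm.const_mul _)]
    refine integral_mono (hint i) ((hsub.const_mul _).add ((hu i).norm.const_mul _)) fun x => ?_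
    have hh_le : ‖h x‖ ≤ ‖h x - φ x‖ + ‖φ x‖ := norm_le_norm_sub_add _ _
    have hu_le : ‖u i x‖ ≤ |C| := (hC i x).trans (le_abs_self C)
    have hφ_le := hB x
    nlinarith [norm_nonneg (u i x), norm_nonneg (h x - φ x)]
  have hlim' : Tendsto (fun i => |C| * ∫ x, ‖h x - φ x‖ ∂μ + B * ∫ x, ‖u i x‖ ∂μ) l
      (𝓝 (|C| * ∫ x, ‖h x - φ x‖ ∂μ)) := by
    simpa using tendsto_const_nhds.add (hlim.const_mul B)
  have hlt : |C| * ∫ x, ‖h x - φ x‖ ∂μ < ε :=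
    (mul_le_mul_of_nonneg_left hφδ.le (abs_nonneg C)).trans_lt hCδ
  filter_upwards [hlim'.eventually_lt_const hlt] with i hi
  exact (hbound i).trans_lt hi

lemma aestronglyMeasurable_circle_coe {w : α → Circle} (hw : AEMeasurable w μ) :
    AEStronglyMeasurable (fun x => (w x : ℂ)) μ :=
  (continuous_subtype_val : Continuous ((↑) : Circle → ℂ)).comp_aestronglyMeasurable
    hw.aestronglyMeasurable

lemma integrable_circle_coe [IsFiniteMeasure μ] {w : α → Circle} (hw : AEMeasurable w μ) :
    Integrable (fun x => (w x : ℂ)) μ :=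
  .of_bound (aestronglyMeasurable_circle_coe hw) 1 (.of_forall fun _ => (Circle.norm_coe _).le)

lemma memLp_norm_circle_coe_sub_one [IsFiniteMeasure μ] {w : α → Circle} (hw : AEMeasurable w μ) (p : ENNReal) :
    MemLp (fun x => ‖(w x : ℂ) - 1‖) p μ :=
  .of_bound ((aestronglyMeasurable_circle_coe hw).sub aestronglyMeasurable_const).norm 2
    (.of_forall fun x => by simpa using Circle.norm_coe_sub_one_le (w x))

variable [IsProbabilityMeasure μ]

lemma integral_norm_circle_coe_sub_one_sq {w : α → Circle} (hw : AEMeasurable w μ) :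
    ∫ x, ‖(w x : ℂ) - 1‖ ^ 2 ∂μ = 2 - 2 * (∫ x, (w x : ℂ) ∂μ).re := by
  have hint : Integrable (fun x => (w x : ℂ).re) μ := (integrable_circle_coe hw).re
  simp_rw [Circle.norm_coe_sub_one_sq]
  have hre : ∫ x, (w x : ℂ).re ∂μ = (∫ x, (w x : ℂ) ∂μ).re := by
    simpa using integral_re (integrable_circle_coe hw)
  rw [integral_sub (integrable_const 2) (hint.const_mul 2), integral_const_mul, hre]
  simp

lemma tendsto_integral_norm_circle_coe_sub_one {w : ι → α → Circle}
    (hw : ∀ i, AEMeasurable (w i) μ) (hlim : Tendsto (fun i => ∫ x, (w i x : ℂ) ∂μ) l (𝓝 1)) :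
    Tendsto (fun i => ∫ x, ‖(w i x : ℂ) - 1‖ ∂μ) l (𝓝 0) := by
  have hsq : Tendsto (fun i => ∫ x, ‖(w i x : ℂ) - 1‖ ^ 2 ∂μ) l (𝓝 0) := by
    simp_rw [integral_norm_circle_coe_sub_one_sq (hw _)]
    simpa using (tendsto_const_nhds (x := (2 : ℝ))).sub
      (((Complex.continuous_re.tendsto 1).comp hlim).const_mul 2)
  refine squeeze_zero (fun i => integral_nonneg fun x => norm_nonneg _) (fun i => ?_)
    (by simpa using hsq.sqrt)
  exact Real.le_sqrt_of_sq_le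
    (sq_integral_le_integral_sq (memLp_norm_circle_coe_sub_one (hw i) 2))

lemma tendsto_integral_circle_coe_mul_of_tendsto_integral {w : ι → α → Circle}
    (hw : ∀ i, AEMeasurable (w i) μ) (hlim : Tendsto (fun i => ∫ x, (w i x : ℂ) ∂μ) l (𝓝 1))
    {h : α → ℂ} (hh : Integrable h μ) :
    Tendsto (fun i => ∫ x, (w i x : ℂ) * h x ∂μ) l (𝓝 (∫ x, h x ∂μ)) := by
  have hint : ∀ i, Integrable (fun x => (w i x : ℂ) * h x) μ := fun i =>
    hh.bdd_mul (aestronglyMeasurable_circle_coe (hw i))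
      (.of_forall fun _ => (Circle.norm_coe _).le)
  rw [tendsto_iff_norm_sub_tendsto_zero]
  refine squeeze_zero (fun _ => norm_nonneg _) (fun i => ?_)
    (tendsto_integral_norm_mul_norm_of_tendsto_integral_norm
      (fun i => (integrable_circle_coe (hw i)).sub (integrable_const 1))
      (fun i x => Circle.norm_coe_sub_one_le (w i x))
      (tendsto_integral_norm_circle_coe_sub_one hw hlim) hh)
  calc ‖∫ x, (w i x : ℂ) * h x ∂μ - ∫ x, h x ∂μ‖
      = ‖∫ x, ((w i x : ℂ) - 1) * h x ∂μ‖ := by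
        rw [← integral_sub (hint i) hh]
        simp_rw [sub_mul, one_mul]
    _ ≤ ∫ x, ‖((w i x : ℂ) - 1) * h x‖ ∂μ := norm_integral_le_integral_norm _
    _ = ∫ x, ‖(w i x : ℂ) - 1‖ * ‖h x‖ ∂μ := by simp_rw [norm_mul]

end

theorem plim_mult_op_eq_id_iff_fourier_general {σ : Measure Circle} [IsProbabilityMeasure σ]
    (p : Ultrafilter ℕ) (P : Polynomial ℤ) :
    (∀ f g : Circle → ℂ, MemLp f 2 σ → MemLp g 2 σ →
        Tendsto
          (fun n : ℕ => ∫ z, ((z ^ (P.eval (n : ℤ)) : Circle) : ℂ) * f z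
            * (starRingEnd ℂ) (g z) ∂σ)
          ↑p (𝓝 (∫ z, f z * (starRingEnd ℂ) (g z) ∂σ)))
      ↔ Tendsto (fun n : ℕ => ∫ z, ((z ^ (P.eval (n : ℤ)) : Circle) : ℂ) ∂σ)
          ↑p (𝓝 (1 : ℂ)) := by
  refine ⟨fun H => by simpa using H 1 1 (memLp_const 1) (memLp_const 1), fun hσ f g hf hg => ?_⟩
  have hw (n : ℕ) : AEMeasurable (fun z : Circle => z ^ P.eval (n : ℤ)) σ :=
    (continuous_zpow _).measurable.aemeasurable
  have hfg : Integrable (fun z => f z * (starRingEnd ℂ) (g z)) σ :=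
    hf.integrable_mul (q := 2) hg.star
  simpa only [mul_assoc] using tendsto_integral_circle_coe_mul_of_tendsto_integral hw hσ hfg

/-- Let `σ` be a probability Borel measure on `S¹`, let `V_σ` be the
unitary operator `(V_σ f)(z) = z f(z)` on `L²(S¹,σ)`, `p` an ultrafilter on `ℕ`, and
`P ∈ ℤ[x]` with `P(0) = 0`. Then `p-lim V_σ^{P(n)} = Id` in the weak operator topology
(expressed via inner products `⟨V_σ^{P(n)} f, g⟩ = ∫ z^{P(n)} f(z) conj(g(z)) dσ` for all
`f, g ∈ L²(σ)`) if and only if `p-lim σ̂(P(n)) = 1`, where `σ̂(k) = ∫ z^k dσ(z)`. -/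
theorem plim_mult_op_eq_id_iff_fourier {σ : Measure Circle} [IsProbabilityMeasure σ]
    (p : Ultrafilter ℕ) (P : Polynomial ℤ) (hP0 : P.eval 0 = 0) :
    (∀ f g : Circle → ℂ, MemLp f 2 σ → MemLp g 2 σ →
        Tendsto
          (fun n : ℕ => ∫ z, ((z ^ (P.eval (n : ℤ)) : Circle) : ℂ) * f z
            * (starRingEnd ℂ) (g z) ∂σ)
          ↑p (𝓝 (∫ z, f z * (starRingEnd ℂ) (g z) ∂σ)))
      ↔ Tendsto (fun n : ℕ => ∫ z, ((z ^ (P.eval (n : ℤ)) : Circle) : ℂ) ∂σ)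
          ↑p (𝓝 (1 : ℂ)) :=
  plim_mult_op_eq_id_iff_fourier_general p P
end

section
/- With V = ℤ_{k₁} ⊕ … ⊕ ℤ_{k_N}, injective characters χ_j, and the bilinear form ξ as above, a subgroup G ⊂ V satisfies the (*)-property (G contains no nonzero element supported on a single coordinate) if and only if K := G^⊥ is an algebraic coupling, i.e., K projects onto ℤ_{k_j} for each coordinate j. -/
/-!
The pairing `ξ` identifies `V` with its group of circle-valued characters: it is injective, and a
finite abelian group has as many characters as elements. Hence the characters of `V / G` show that
`G` is the annihilator of `K = G^⊥`. If the projection of `K` to the coordinate `r` is a proper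
subgroup `H` of `ℤ_{k_r}`, then `b = |H|` is nonzero and kills `H`, so `b • e_r` pairs trivially
with `K`, lies in `G`, and violates (*). Conversely, if `c ∈ K` has `c_r = 1` and `g ∈ G` is
supported on `r`, then `χ_r (g_r) = ξ(c, g) = 1`, so `g_r = 0`.
-/

open Finset Function

namespace ZMod

lemma exists_ne_zero_forall_mul_eq_zero_of_ne_top {n : ℕ} [NeZero n] {H : AddSubgroup (ZMod n)}
    (hH : H ≠ ⊤) : ∃ b : ZMod n, b ≠ 0 ∧ ∀ h ∈ H, h * b = 0 := by
  refine ⟨Nat.card H, fun hzero => hH ?_, fun h hh => ?_⟩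
  · rw [ZMod.natCast_eq_zero_iff] at hzero
    refine AddSubgroup.eq_top_of_card_eq H (Nat.dvd_antisymm ?_ ?_)
    · exact AddSubgroup.card_addSubgroup_dvd_card H
    · rwa [Nat.card_zmod]
  · rw [mul_comm, ← nsmul_eq_mul]
    exact congrArg Subtype.val (card_nsmul_eq_zero' (x := (⟨h, hh⟩ : H)))

end ZMod

namespace AddChar

variable {α : Type*} [AddCommGroup α] [Finite α]

lemma exists_circle_apply_ne_one {a : α} (ha : a ≠ 0) :
    ∃ ψ : AddChar α Circle, ψ a ≠ 1 := by
  obtain ⟨ψ, hψ⟩ := exists_apply_ne_zero.mpr ha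
  refine ⟨circleEquivComplex.symm ψ, fun h => hψ ?_⟩
  exact congrArg (fun z : Circle => (z : ℂ)) h |>.trans Circle.coe_one

lemma exists_circle_forall_mem_eq_one_apply_ne_one {G : AddSubgroup α} {a : α} (ha : a ∉ G) :
    ∃ ψ : AddChar α Circle, (∀ g ∈ G, ψ g = 1) ∧ ψ a ≠ 1 := by
  obtain ⟨ψ, hψ⟩ := exists_circle_apply_ne_one ((QuotientAddGroup.eq_zero_iff a).not.mpr ha)
  refine ⟨ψ.compAddMonoidHom (QuotientAddGroup.mk' G), fun g hg => ?_, hψ⟩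
  simp [(QuotientAddGroup.eq_zero_iff g).mpr hg]

lemma natCard_circle : Nat.card (AddChar α Circle) = Nat.card α := by
  have := Fintype.ofFinite α
  rw [Nat.card_congr (circleEquivComplex (α := α)).toEquiv, Nat.card_eq_fintype_card,
    Nat.card_eq_fintype_card]
  convert card_eq (α := α)

lemma surjective_of_injective_circle {ξ : α → AddChar α Circle} (hξ : Injective ξ) :
    Surjective ξ :=
  have : Finite (AddChar α Circle) := .of_equiv _ circleEquivComplex.symm.toEquiv
  (hξ.bijective_of_nat_card_le natCard_circle.le).surjective

variable {V W M : Type*} [AddGroup V] [AddCommGroup W] [CommMonoid M]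

def annihilator (ξ : AddChar V (AddChar W M)) (G : AddSubgroup W) : AddSubgroup V where
  carrier := {c | ∀ d ∈ G, ξ c d = 1}
  zero_mem' d _ := by rw [map_zero_eq_one, one_apply]
  add_mem' {c c'} hc hc' d hd := by
    rw [map_add_eq_mul, mul_apply, hc d hd, hc' d hd, one_mul]
  neg_mem' {c} hc d hd := by
    rw [map_neg_eq_inv, inv_apply, hc (-d) (neg_mem hd)]

lemma mem_of_forall_mem_annihilator_apply_eq_one [Finite W]
    {ξ : AddChar V (AddChar W Circle)} (hξ : Surjective ξ) {G : AddSubgroup W} {d : W}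
    (hd : ∀ c ∈ ξ.annihilator G, ξ c d = 1) : d ∈ G := by
  by_contra hdG
  obtain ⟨ψ, hψG, hψd⟩ := exists_circle_forall_mem_eq_one_apply_ne_one hdG
  obtain ⟨c, rfl⟩ := hξ ψ
  exact hψd (hd c hψG)

end AddChar

section Pairing

variable {N : ℕ} {k : Fin N → ℕ} (χ : ∀ j, AddChar (ZMod (k j)) Circle)

noncomputable def coordPairing :
    AddChar (∀ j, ZMod (k j)) (AddChar (∀ j, ZMod (k j)) Circle) where
  toFun c :=
    { toFun d := ∏ j, χ j (c j * d j)
      map_zero_eq_one' := by simp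
      map_add_eq_mul' d d' := by
        simp only [Pi.add_apply, mul_add, AddChar.map_add_eq_mul, prod_mul_distrib] }
  map_zero_eq_one' := by ext d; simp
  map_add_eq_mul' c c' := by ext d; simp [add_mul, AddChar.map_add_eq_mul, prod_mul_distrib]

lemma coordPairing_apply (c d : ∀ j, ZMod (k j)) :
    coordPairing χ c d = ∏ j, χ j (c j * d j) :=
  rfl

lemma coordPairing_apply_single (c : ∀ j, ZMod (k j)) (r : Fin N) (b : ZMod (k r)) :
    coordPairing χ c (Pi.single r b) = χ r (c r * b) := by
  rw [coordPairing_apply, prod_eq_single r (fun j _ hj => by simp [hj]) (by simp),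
    Pi.single_eq_same]

lemma coordPairing_injective (hχ : ∀ j, Injective (χ j)) : Injective (coordPairing χ) := by
  intro c c' h
  funext j
  have := DFunLike.congr_fun h (Pi.single j 1)
  rw [coordPairing_apply_single, coordPairing_apply_single, mul_one, mul_one] at this
  exact hχ j this

end Pairing

/-- With `V = ℤ_{k₁} ⊕ … ⊕ ℤ_{k_N}`, injective characters `χ_j`, and the
bilinear form `ξ(c,d) = χ₁(c₁d₁)···χ_N(c_N d_N)`, a subgroup `G ⊆ V` satisfies the
(*)-property (no nonzero element of `G` is supported on a single coordinate) if and only if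
`K := G^⊥` is an algebraic coupling, i.e. `K` projects onto `ℤ_{k_j}` for every
coordinate `j`. -/
theorem star_property_iff_annihilator_coupling {N : ℕ} (k : Fin N → ℕ)
    [∀ j, NeZero (k j)]
    (χ : ∀ j, AddChar (ZMod (k j)) Circle) (hχ : ∀ j, Function.Injective (χ j))
    (G : AddSubgroup (∀ j, ZMod (k j))) :
    (∀ g ∈ G, ∀ r : Fin N, (∀ j : Fin N, j ≠ r → g j = 0) → g r = 0)
      ↔ ∀ (r : Fin N) (a : ZMod (k r)),
          ∃ c : ∀ j, ZMod (k j),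
            (∀ d ∈ G, (∏ j, χ j (c j * d j)) = 1) ∧ c r = a := by
  have hsurj := AddChar.surjective_of_injective_circle (coordPairing_injective χ hχ)
  constructor
  · intro hstar r
    suffices hK : ((coordPairing χ).annihilator G).map (Pi.evalAddMonoidHom _ r) = ⊤ by
      intro a
      obtain ⟨c, hc, hcr⟩ := hK ▸ AddSubgroup.mem_top a
      exact ⟨c, hc, hcr⟩
    by_contra hK
    obtain ⟨b, hb, hKb⟩ := ZMod.exists_ne_zero_forall_mul_eq_zero_of_ne_top hK
    have hbG : Pi.single r b ∈ G :=
      AddChar.mem_of_forall_mem_annihilator_apply_eq_one hsurj fun c hc => by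
        rw [coordPairing_apply_single, hKb (c r) ⟨c, hc, rfl⟩, AddChar.map_zero_eq_one]
    exact hb (by simpa using hstar _ hbG r fun j hj => Pi.single_eq_of_ne hj _)
  · intro hcoupling g hg r hsupp
    obtain ⟨c, hcG, hcr⟩ := hcoupling r 1
    have hg_single : g = Pi.single r (g r) := funext fun j => by
      rcases eq_or_ne j r with rfl | hj
      · rw [Pi.single_eq_same]
      · rw [Pi.single_eq_of_ne hj, hsupp j hj]
    have hχr := hcG g hg
    rw [← coordPairing_apply χ, hg_single, coordPairing_apply_single, hcr, one_mul] at hχr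
    exact AddChar.injective_iff.mp (hχ r) hχr
end

section
/- Let G ⊂ ℤ_{k₁} ⊕ … ⊕ ℤ_{k_N} be a subgroup satisfying the (*)-property, and let G₁ be the projection of G onto the first N−1 coordinates. Then there exists a group homomorphism w : G₁ → ℤ_{k_N} such that G = {(g₁, w(g₁)) : g₁ ∈ G₁}; moreover, ker w, viewed as a subgroup of ℤ_{k₁} ⊕ … ⊕ ℤ_{k_{N−1}}, also satisfies the (*)-property. -/
/-!
Applied to the last coordinate, the (*)-property says that an element of `G` is determined by
its first `N` coordinates, so the projection `G → G₁` is an isomorphism and `w` is the last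
coordinate of its inverse. An element of `ker w` is the projection of an element of `G` whose
last coordinate vanishes, so the (*)-property of `G` restricts to it.
-/

section StarProperty

variable {ι : Type*} {A : ι → Type*} [∀ i, AddCommGroup (A i)]

def HasStarProperty (G : AddSubgroup (∀ i, A i)) : Prop :=
  ∀ g ∈ G, ∀ r : ι, (∀ j, j ≠ r → g j = 0) → g r = 0

end StarProperty

def Fin.initAddMonoidHom {N : ℕ} (A : Fin (N + 1) → Type*) [∀ i, AddCommGroup (A i)] :
    (∀ i, A i) →+ ∀ j : Fin N, A j.castSucc where
  toFun := Fin.init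
  map_zero' := rfl
  map_add' _ _ := rfl

namespace HasStarProperty

open Fin (initAddMonoidHom)

variable {N : ℕ} {A : Fin (N + 1) → Type*} [∀ i, AddCommGroup (A i)]
  {G : AddSubgroup (∀ i, A i)} (hG : HasStarProperty G)
include hG

theorem eq_zero_of_init_eq_zero {g : ∀ i, A i} (hg : g ∈ G) (hinit : Fin.init g = 0) :
    g = 0 := by
  have hlast : g (Fin.last N) = 0 := hG g hg (Fin.last N) fun j hj => by
    obtain ⟨j, rfl⟩ := Fin.exists_castSucc_eq.mpr hj
    exact congrFun hinit j
  funext i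
  induction i using Fin.lastCases with
  | last => exact hlast
  | cast j => exact congrFun hinit j

theorem bijective_addSubgroupMap_initAddMonoidHom :
    Function.Bijective ((initAddMonoidHom A).addSubgroupMap G) := by
  refine ⟨(injective_iff_map_eq_zero _).mpr fun g hg => ?_,
    (initAddMonoidHom A).addSubgroupMap_surjective G⟩
  exact Subtype.ext (hG.eq_zero_of_init_eq_zero g.2 (congrArg Subtype.val hg))

noncomputable def graphHom : G.map (initAddMonoidHom A) →+ A (Fin.last N) :=
  (Pi.evalAddMonoidHom A (Fin.last N)).comp <| G.subtype.comp
    (AddEquiv.ofBijective _ hG.bijective_addSubgroupMap_initAddMonoidHom).symm.toAddMonoidHom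

theorem graphHom_apply_init {g : ∀ i, A i} (hg : g ∈ G) :
    hG.graphHom ⟨Fin.init g, AddSubgroup.mem_map_of_mem (initAddMonoidHom A) hg⟩ =
      g (Fin.last N) :=
  congrArg (fun x : G => (x : ∀ i, A i) (Fin.last N))
    ((AddEquiv.ofBijective _ hG.bijective_addSubgroupMap_initAddMonoidHom).symm_apply_apply
      ⟨g, hg⟩)

theorem mem_iff_graphHom (g : ∀ i, A i) :
    g ∈ G ↔ ∃ h : Fin.init g ∈ G.map (initAddMonoidHom A),
      g (Fin.last N) = hG.graphHom ⟨_, h⟩ := by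
  refine ⟨fun hg => ⟨_, (hG.graphHom_apply_init hg).symm⟩, fun ⟨h, hlast⟩ => ?_⟩
  obtain ⟨g', hg', hinit⟩ := AddSubgroup.mem_map.mp h
  change Fin.init g' = Fin.init g at hinit
  have hlast' : g (Fin.last N) = g' (Fin.last N) := by
    rw [hlast, ← hG.graphHom_apply_init hg']
    simp only [hinit]
  rwa [← Fin.snoc_init_self g, ← hinit, hlast', Fin.snoc_init_self]

theorem hasStarProperty_ker_graphHom :
    HasStarProperty (hG.graphHom.ker.map (G.map (initAddMonoidHom A)).subtype) := by
  rintro _ ⟨⟨_, hy⟩, hker, rfl⟩ r hr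
  obtain ⟨g, hg, rfl⟩ := AddSubgroup.mem_map.mp hy
  have hlast : g (Fin.last N) = 0 := (hG.graphHom_apply_init hg).symm.trans hker
  refine hG g hg r.castSucc fun j hj => ?_
  induction j using Fin.lastCases with
  | last => exact hlast
  | cast j => exact hr j (ne_of_apply_ne Fin.castSucc hj)

end HasStarProperty

/-- Let `G ⊆ ℤ_{k₀} ⊕ … ⊕ ℤ_{k_N}` be a subgroup satisfying the
(*)-property and let `G₁` be the projection of `G` onto the first `N` coordinates. Then
there is a group homomorphism `w : G₁ → ℤ_{k_N}` such that `G = {(g₁, w g₁) : g₁ ∈ G₁}`;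
moreover the kernel of `w`, viewed inside `ℤ_{k₀} ⊕ … ⊕ ℤ_{k_{N-1}}`, also satisfies the
(*)-property. -/
theorem star_property_graph_decomposition {N : ℕ} (k : Fin (N + 1) → ℕ)
    (G : AddSubgroup (∀ j : Fin (N + 1), ZMod (k j)))
    (hstar : ∀ g ∈ G, ∀ r : Fin (N + 1), (∀ j, j ≠ r → g j = 0) → g r = 0)
    (G₁ : AddSubgroup (∀ j : Fin N, ZMod (k j.castSucc)))
    (hG₁ : ∀ x : ∀ j : Fin N, ZMod (k j.castSucc),
      x ∈ G₁ ↔ ∃ g ∈ G, ∀ j : Fin N, g j.castSucc = x j) :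
    ∃ w : G₁ →+ ZMod (k (Fin.last N)),
      (∀ g : ∀ j : Fin (N + 1), ZMod (k j),
        g ∈ G ↔ ∃ h : (fun j : Fin N => g j.castSucc) ∈ G₁,
          g (Fin.last N) = w ⟨fun j : Fin N => g j.castSucc, h⟩) ∧
      (∀ y : G₁, w y = 0 →
        ∀ r : Fin N,
          (∀ j : Fin N, j ≠ r → (y : ∀ j : Fin N, ZMod (k j.castSucc)) j = 0) →
            (y : ∀ j : Fin N, ZMod (k j.castSucc)) r = 0) := by
  have hG : HasStarProperty G := hstar
  obtain rfl : G₁ = G.map (Fin.initAddMonoidHom _) := AddSubgroup.ext fun x => by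
    simp only [hG₁, AddSubgroup.mem_map, funext_iff]
    rfl
  exact ⟨hG.graphHom, hG.mem_iff_graphHom, fun y hy r =>
    hG.hasStarProperty_ker_graphHom y ⟨y, hy, rfl⟩ r⟩
end

section
/- Let H be a subgroup of ℤ^N and Q₁,…,Q_t ∈ ℤ^N \ H. Then there exists a subgroup G ⊂ ℤ^N of finite index such that H ⊂ G and Q₁,…,Q_t ∉ G. -/
/-!
A finitely generated abelian group is residually finite: it is `ℤⁿ × T` with `T` finite, and a
nonzero integer `k` survives in `ZMod (|k| + 1)`. Apply this to `ℤ^N ⧸ H`: each `Qᵢ` has nonzero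
image there, so some finite-index subgroup of the quotient misses it, and the intersection of the
preimages of these finitely many subgroups is the required `G`.
-/

open DirectSum

namespace AddGroup

theorem eq_zero_of_forall_mem_finiteIndexNormalAddSubgroup {G : Type*} [AddGroup G]
    [ResiduallyFinite G] {g : G} (hg : ∀ K : FiniteIndexNormalAddSubgroup G, g ∈ K) : g = 0 :=
  residuallyFinite_iff_forall_finiteIndexNormalAddSubgroup.mp ‹_› g hg

theorem ResiduallyFinite.of_injective {G G' : Type*} [AddGroup G] [AddGroup G']
    [ResiduallyFinite G'] (f : G →+ G') (hf : Function.Injective f) : ResiduallyFinite G :=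
  residuallyFinite_iff_forall_finiteIndexNormalAddSubgroup.mpr fun _ hg ↦
    hf <| (eq_zero_of_forall_mem_finiteIndexNormalAddSubgroup fun K ↦ hg (K.comap f)).trans
      (map_zero f).symm

instance : ResiduallyFinite ℤ :=
  residuallyFinite_of_forall_exists_finite_addMonoidHom fun k hk ↦
    ⟨ZMod (k.natAbs + 1), inferInstance, inferInstance, Int.castAddHom _, by
      rw [Int.coe_castAddHom, ne_eq, ZMod.intCast_zmod_eq_zero_iff_dvd, Int.natCast_dvd]
      intro hdvd
      have := Nat.le_of_dvd (Int.natAbs_pos.mpr hk) hdvd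
      omega⟩

instance {ι : Type*} {G : ι → Type*} [∀ i, AddGroup (G i)]
    [∀ i, ResiduallyFinite (G i)] : ResiduallyFinite (∀ i, G i) :=
  residuallyFinite_iff_forall_finiteIndexNormalAddSubgroup.mpr fun _ hg ↦ funext fun i ↦
    eq_zero_of_forall_mem_finiteIndexNormalAddSubgroup fun K ↦
      hg (K.comap (Pi.evalAddMonoidHom G i))

theorem residuallyFinite_of_fg (A : Type*) [AddCommGroup A] [FG A] : ResiduallyFinite A := by
  obtain ⟨n, ι, _, p, hp, e, ⟨φ⟩⟩ := AddCommGroup.equiv_free_prod_directSum_zmod A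
  have : ∀ i, NeZero (p i ^ e i) := fun i ↦ ⟨pow_ne_zero _ (hp i).ne_zero⟩
  have : Finite (⨁ i, ZMod (p i ^ e i)) := Finite.of_equiv _ DFinsupp.equivFunOnFintype.symm
  have : ResiduallyFinite (Fin n →₀ ℤ) :=
    let ψ := (Finsupp.linearEquivFunOnFinite ℤ ℤ (Fin n)).toAddEquiv
    .of_injective ψ.toAddMonoidHom ψ.injective
  exact .of_injective φ.toAddMonoidHom φ.injective

end AddGroup

theorem AddSubgroup.exists_finiteIndex_ge_forall_notMem {G : Type*} [AddGroup G]
    (H : AddSubgroup G) [H.Normal] [AddGroup.ResiduallyFinite (G ⧸ H)] {ι : Type*} [Finite ι]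
    {g : ι → G} (hg : ∀ i, g i ∉ H) :
    ∃ K : AddSubgroup G, K.FiniteIndex ∧ H ≤ K ∧ ∀ i, g i ∉ K := by
  have hne (i : ι) : (g i : G ⧸ H) ≠ 0 := (QuotientAddGroup.eq_zero_iff _).not.mpr (hg i)
  choose L hL using fun i ↦ AddGroup.exists_finiteIndexNormalAddSubgroup_notMem _ (hne i)
  let K (i : ι) := (L i).comap (QuotientAddGroup.mk' H)
  refine ⟨⨅ i, (K i).toAddSubgroup, finiteIndex_iInf fun i ↦ (K i).isFiniteIndex',
    le_iInf fun i h hh ↦ ?_, fun i hi ↦ hL i (iInf_le (fun i ↦ (K i).toAddSubgroup) i hi)⟩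
  show (h : G ⧸ H) ∈ L i
  exact (QuotientAddGroup.eq_zero_iff h).mpr hh ▸ zero_mem _

/-- separation lemma. Let `H` be a subgroup of `ℤ^N` and
`Q₁,…,Q_t ∈ ℤ^N \ H`. Then there is a subgroup `G ⊆ ℤ^N` of finite index with `H ⊆ G` and
`Q₁,…,Q_t ∉ G`. -/
theorem exists_finite_index_separating_subgroup {N t : ℕ}
    (H : AddSubgroup (Fin N → ℤ)) (Q : Fin t → (Fin N → ℤ)) (hQ : ∀ i, Q i ∉ H) :
    ∃ G : AddSubgroup (Fin N → ℤ), G.index ≠ 0 ∧ H ≤ G ∧ ∀ i, Q i ∉ G := by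
  have := AddGroup.residuallyFinite_of_fg ((Fin N → ℤ) ⧸ H)
  obtain ⟨G, hG, hHG, hQG⟩ := H.exists_finiteIndex_ge_forall_notMem hQ
  exact ⟨G, hG.index_ne_zero, hHG, hQG⟩
end
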